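/- arXiv:2505.08655 — 4 statements merged into one kernel-verified Lean document; each statement's English description precedes it below -/
import Mathlib

section
/- (Middle game A) If b ≥ 2, then nim(TER(M)) = 1 for M = [[1,b,1],[0,1,0],[1,b,1]]. -/
/-!
Every position reachable from the start has the shape `[[a,t,c],[0,e,0],[g,u,i]]`, so the edge
conditions read `a+t+c, g+u+i, a+g, c+i > 0`. When all four corners are `1`, a corner move leaves a
column with a single `1`, whose removal ends the game; so corner moves lead to nonzero positions and
the rest is a parity game in `t+u+e`: nim-value `0` iff `t+u+e` is even. When `a = c = 0`
(and `t > 0`), removing `g`, `i` or the last unit of `t` ends the game and every other move flips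
the parity, so the nim-value is `1` iff `t+u+e` is odd; the case `g = i = 0` is the same game with
the rows swapped. From the start (`t = u = b`, `e = 1`) middle-column moves reach nim-value `0`,
and after a corner move, removing the other corner of the same row reaches nim-value `1`.
-/

/-- The minimum excludant of a set of naturals. -/
noncomputable def mex (S : Set ℕ) : ℕ := sInf {n : ℕ | n ∉ S}

/-- A gamegraph: positions with an option function whose option relation is
well-founded (all plays are acyclic), together with a starting position. -/
structure GameGraph where
  Pos : Type
  opt : Pos → Set Pos
  wf : WellFounded fun q p => q ∈ opt p
  start : Pos

/-- The nim-value of a position: the mex of the nim-values of its options;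
terminal positions get nim-value `0`. -/
noncomputable def GameGraph.nim (G : GameGraph) : G.Pos → ℕ :=
  G.wf.fix fun p ih => mex {n : ℕ | ∃ q, ∃ h : q ∈ G.opt p, ih q h = n}

/-- The nim-value of a gamegraph is the nim-value of its starting position. -/
noncomputable def GameGraph.nimValue (G : GameGraph) : ℕ := G.nim G.start

/-- 3×3 matrices of nonnegative integers. -/
abbrev Mat3 := Fin 3 → Fin 3 → ℕ

/-- All four edge sums (top row, bottom row, left column, right column) are positive. -/
def edgeOK (M : Mat3) : Prop :=
  0 < M 0 0 + M 0 1 + M 0 2 ∧ 0 < M 2 0 + M 2 1 + M 2 2 ∧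
  0 < M 0 0 + M 1 0 + M 2 0 ∧ 0 < M 0 2 + M 1 2 + M 2 2

/-- Decrease entry `(i, j)` by one. -/
def decEntry (M : Mat3) (i j : Fin 3) : Mat3 :=
  fun a b => if a = i ∧ b = j then M a b - 1 else M a b

/-- Matrices obtained from `M` by decreasing one positive entry by `1`. -/
def matMoves (M : Mat3) : Set Mat3 :=
  {N | ∃ i j, 0 < M i j ∧ N = decEntry M i j}

/-- Options in the avoidance matrix game `DNT(M)`: decrease a positive entry by one
so that all four edge sums remain positive. -/
def DNTmatOpt (M : Mat3) : Set Mat3 := {N | N ∈ matMoves M ∧ edgeOK N}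

/-- Options in the achievement matrix game `TER(M)`: a matrix with a zero edge sum is
terminal; otherwise any positive entry may be decreased by one. -/
def TERmatOpt (M : Mat3) : Set Mat3 := {N | edgeOK M ∧ N ∈ matMoves M}

def mtot (M : Mat3) : ℕ := ∑ p : Fin 3 × Fin 3, M p.1 p.2

theorem mtot_lt {M N : Mat3} (h : N ∈ matMoves M) : mtot N < mtot M := by
  obtain ⟨i, j, hpos, rfl⟩ := h
  unfold mtot
  apply Finset.sum_lt_sum
  · intro p _
    simp only [decEntry]
    split <;> omega
  · refine ⟨(i, j), Finset.mem_univ _, ?_⟩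
    have hlt : M i j - 1 < M i j := by omega
    simpa [decEntry] using hlt

theorem matWF {opt : Mat3 → Set Mat3} (h : ∀ M N, N ∈ opt M → N ∈ matMoves M) :
    WellFounded fun N M => N ∈ opt M :=
  Subrelation.wf (fun {N M} hNM => mtot_lt (h M N hNM)) (InvImage.wf mtot Nat.lt_wfRel.wf)

/-- The gamegraph of the matrix game `DNT(M)` with starting position `M`. -/
def DNTmat (M : Mat3) : GameGraph :=
  ⟨Mat3, DNTmatOpt, matWF (fun _ _ h => h.1), M⟩

/-- The gamegraph of the matrix game `TER(M)` with starting position `M`. -/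
def TERmat (M : Mat3) : GameGraph :=
  ⟨Mat3, TERmatOpt, matWF (fun _ _ h => h.2), M⟩

/-- The nim-value of the matrix game `DNT(M)`. -/
noncomputable def nimDNTmat (M : Mat3) : ℕ := (DNTmat M).nimValue

/-- The nim-value of the matrix game `TER(M)`. -/
noncomputable def nimTERmat (M : Mat3) : ℕ := (TERmat M).nimValue

theorem mex_eq_of_forall_lt_mem {S : Set ℕ} {n : ℕ} (h : ∀ m < n, m ∈ S) (hn : n ∉ S) :
    mex S = n :=
  le_antisymm (Nat.sInf_le hn) (le_csInf ⟨n, hn⟩ fun _ hm => not_lt.1 fun hlt => hm (h _ hlt))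

theorem mex_notMem {S : Set ℕ} (hS : S.Finite) : mex S ∉ S :=
  Nat.sInf_mem hS.infinite_compl.nonempty

namespace GameGraph

variable (G : GameGraph) {p q : G.Pos}

theorem nim_eq_mex (p : G.Pos) :
    G.nim p = mex {n | ∃ q, ∃ _ : q ∈ G.opt p, G.nim q = n} :=
  G.wf.fix_eq _ p

theorem nim_eq_of {n : ℕ} (hlt : ∀ m < n, ∃ q ∈ G.opt p, G.nim q = m)
    (hn : ∀ q ∈ G.opt p, G.nim q ≠ n) : G.nim p = n := by
  rw [nim_eq_mex]
  refine mex_eq_of_forall_lt_mem (fun m hm => ?_) ?_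
  · obtain ⟨q, hq, rfl⟩ := hlt m hm
    exact ⟨q, hq, rfl⟩
  · rintro ⟨q, hq, hqn⟩
    exact hn q hq hqn

theorem nim_ne_of_mem_opt (hfin : (G.opt p).Finite) (hq : q ∈ G.opt p) :
    G.nim q ≠ G.nim p := by
  have hvals : {n | ∃ q, ∃ _ : q ∈ G.opt p, G.nim q = n}.Finite :=
    (hfin.image G.nim).subset (by rintro _ ⟨q, hq, rfl⟩; exact ⟨q, hq, rfl⟩)
  have := mex_notMem hvals
  rw [← nim_eq_mex] at this
  exact fun h => this ⟨q, hq, h⟩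

theorem nim_apply_eq_of_opt_apply (σ : G.Pos → G.Pos) (hσ : ∀ p, G.opt (σ p) = σ '' G.opt p)
    (p : G.Pos) : G.nim (σ p) = G.nim p := by
  induction p using G.wf.induction with
  | _ p ih =>
    rw [nim_eq_mex, nim_eq_mex, hσ]
    congr 1
    ext n
    constructor
    · rintro ⟨_, ⟨q, hq, rfl⟩, rfl⟩
      exact ⟨q, hq, (ih q hq).symm⟩
    · rintro ⟨q, hq, rfl⟩
      exact ⟨σ q, ⟨q, hq, rfl⟩, ih q hq⟩

end GameGraph

theorem finite_TERmatOpt (M : Mat3) : (TERmatOpt M).Finite :=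
  (Set.finite_range fun p : Fin 3 × Fin 3 => decEntry M p.1 p.2).subset
    (by rintro _ ⟨-, i, j, -, rfl⟩; exact ⟨(i, j), rfl⟩)

-- The nim function of `TERmat M` does not depend on the start `M`; `nimTERmat M = terNim M` by `rfl`.
noncomputable def terNim : Mat3 → ℕ := (TERmat 0).nim

section Ter

variable {M N : Mat3}

theorem terNim_eq_of {n : ℕ} (hlt : ∀ m < n, ∃ N ∈ TERmatOpt M, terNim N = m)
    (hn : ∀ N ∈ TERmatOpt M, terNim N ≠ n) : terNim M = n :=
  (TERmat 0).nim_eq_of hlt hn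

theorem terNim_ne_of_mem {n : ℕ} (h : N ∈ TERmatOpt M) (hN : terNim N = n) : terNim M ≠ n :=
  fun hM => (TERmat 0).nim_ne_of_mem_opt (finite_TERmatOpt M) h (hN.trans hM.symm)

theorem terNim_eq_zero_of_not_edgeOK (h : ¬ edgeOK M) : terNim M = 0 :=
  terNim_eq_of (by simp) fun _ hN => absurd hN.1 h

def rowRev (M : Mat3) : Mat3 := fun r s => M r.rev s

theorem edgeOK_rowRev : edgeOK (rowRev M) ↔ edgeOK M := by
  simp [edgeOK, rowRev]
  omega

theorem decEntry_rowRev (r s : Fin 3) : decEntry (rowRev M) r.rev s = rowRev (decEntry M r s) := by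
  ext x y
  simp [decEntry, rowRev, Fin.rev_eq_iff]

theorem TERmatOpt_rowRev : TERmatOpt (rowRev M) = rowRev '' TERmatOpt M := by
  ext N
  constructor
  · rintro ⟨hE, r, s, hpos, rfl⟩
    refine ⟨decEntry M r.rev s, ⟨edgeOK_rowRev.1 hE, r.rev, s, hpos, rfl⟩, ?_⟩
    rw [← decEntry_rowRev, Fin.rev_rev]
  · rintro ⟨_, ⟨hE, r, s, hpos, rfl⟩, rfl⟩
    exact ⟨edgeOK_rowRev.2 hE, r.rev, s, by simpa [rowRev] using hpos, (decEntry_rowRev r s).symm⟩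

theorem terNim_rowRev (M : Mat3) : terNim (rowRev M) = terNim M :=
  (TERmat 0).nim_apply_eq_of_opt_apply rowRev (fun _ => TERmatOpt_rowRev) M

end Ter

def ishape (a t c e g u i : ℕ) : Mat3 := ![![a, t, c], ![0, e, 0], ![g, u, i]]

section ishape

variable {a t c e g u i : ℕ}

@[simp]
theorem edgeOK_ishape :
    edgeOK (ishape a t c e g u i) ↔ 0 < a + t + c ∧ 0 < g + u + i ∧ 0 < a + g ∧ 0 < c + i := by
  simp [edgeOK, ishape]

theorem decEntry_ishape :
    decEntry (ishape a t c e g u i) 0 0 = ishape (a - 1) t c e g u i ∧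
      decEntry (ishape a t c e g u i) 0 1 = ishape a (t - 1) c e g u i ∧
      decEntry (ishape a t c e g u i) 0 2 = ishape a t (c - 1) e g u i ∧
      decEntry (ishape a t c e g u i) 1 1 = ishape a t c (e - 1) g u i ∧
      decEntry (ishape a t c e g u i) 2 0 = ishape a t c e (g - 1) u i ∧
      decEntry (ishape a t c e g u i) 2 1 = ishape a t c e g (u - 1) i ∧
      decEntry (ishape a t c e g u i) 2 2 = ishape a t c e g u (i - 1) := by
  refine ⟨?_, ?_, ?_, ?_, ?_, ?_, ?_⟩ <;> ext r s <;> fin_cases r <;> fin_cases s <;> rfl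

theorem mem_TERmatOpt_ishape {N : Mat3} :
    N ∈ TERmatOpt (ishape a t c e g u i) ↔ edgeOK (ishape a t c e g u i) ∧
      (0 < a ∧ N = ishape (a - 1) t c e g u i ∨ 0 < t ∧ N = ishape a (t - 1) c e g u i ∨
        0 < c ∧ N = ishape a t (c - 1) e g u i ∨ 0 < e ∧ N = ishape a t c (e - 1) g u i ∨
        0 < g ∧ N = ishape a t c e (g - 1) u i ∨ 0 < u ∧ N = ishape a t c e g (u - 1) i ∨
        0 < i ∧ N = ishape a t c e g u (i - 1)) := by
  obtain ⟨h00, h01, h02, h11, h20, h21, h22⟩ := decEntry_ishape (a := a) (t := t) (c := c)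
    (e := e) (g := g) (u := u) (i := i)
  refine and_congr_right fun _ => ⟨?_, ?_⟩
  · rintro ⟨r, s, hpos, rfl⟩
    fin_cases r <;> fin_cases s <;> simp [ishape] at hpos <;> simp [*]
  · rintro (⟨h, rfl⟩ | ⟨h, rfl⟩ | ⟨h, rfl⟩ | ⟨h, rfl⟩ | ⟨h, rfl⟩ | ⟨h, rfl⟩ | ⟨h, rfl⟩)
    exacts [⟨0, 0, h, h00.symm⟩, ⟨0, 1, h, h01.symm⟩, ⟨0, 2, h, h02.symm⟩, ⟨1, 1, h, h11.symm⟩,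
      ⟨2, 0, h, h20.symm⟩, ⟨2, 1, h, h21.symm⟩, ⟨2, 2, h, h22.symm⟩]

theorem rowRev_ishape : rowRev (ishape a t c e g u i) = ishape g u i e a t c := by
  ext r s
  fin_cases r <;> fin_cases s <;> rfl

end ishape

theorem terNim_ishape_corners_one_eq_zero_iff (t e u : ℕ) :
    terNim (ishape 1 t 1 e 1 u 1) = 0 ↔ Even (t + u + e) := by
  constructor
  · intro h0
    by_contra hodd
    obtain ⟨N, hN, hN0⟩ : ∃ N ∈ TERmatOpt (ishape 1 t 1 e 1 u 1), terNim N = 0 := by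
      rcases Nat.eq_zero_or_pos t with rfl | ht
      · rcases Nat.eq_zero_or_pos u with rfl | hu
        · have he : 0 < e := by grind
          refine ⟨ishape 1 0 1 (e - 1) 1 0 1, mem_TERmatOpt_ishape.2 ⟨by simp, by simp [he]⟩, ?_⟩
          exact (terNim_ishape_corners_one_eq_zero_iff 0 (e - 1) 0).2 (by grind)
        · refine ⟨ishape 1 0 1 e 1 (u - 1) 1, mem_TERmatOpt_ishape.2 ⟨by simp, by simp [hu]⟩, ?_⟩
          exact (terNim_ishape_corners_one_eq_zero_iff 0 e (u - 1)).2 (by grind)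
      · refine ⟨ishape 1 (t - 1) 1 e 1 u 1, mem_TERmatOpt_ishape.2 ⟨by simp, by simp [ht]⟩, ?_⟩
        exact (terNim_ishape_corners_one_eq_zero_iff (t - 1) e u).2 (by grind)
    exact terNim_ne_of_mem hN hN0 h0
  · intro heven
    refine terNim_eq_of (by simp) fun N hN => ?_
    rcases (mem_TERmatOpt_ishape.1 hN).2 with ⟨-, rfl⟩ | ⟨ht, rfl⟩ | ⟨-, rfl⟩ | ⟨he, rfl⟩ |
      ⟨-, rfl⟩ | ⟨hu, rfl⟩ | ⟨-, rfl⟩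
    · exact terNim_ne_of_mem (N := ishape 0 t 1 e 0 u 1)
        (mem_TERmatOpt_ishape.2 ⟨by simp, by simp⟩) (terNim_eq_zero_of_not_edgeOK (by simp))
    · rw [Ne, terNim_ishape_corners_one_eq_zero_iff]; grind
    · exact terNim_ne_of_mem (N := ishape 1 t 0 e 1 u 0)
        (mem_TERmatOpt_ishape.2 ⟨by simp, by simp⟩) (terNim_eq_zero_of_not_edgeOK (by simp))
    · rw [Ne, terNim_ishape_corners_one_eq_zero_iff]; grind
    · exact terNim_ne_of_mem (N := ishape 0 t 1 e 0 u 1)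
        (mem_TERmatOpt_ishape.2 ⟨by simp, by simp⟩) (terNim_eq_zero_of_not_edgeOK (by simp))
    · rw [Ne, terNim_ishape_corners_one_eq_zero_iff]; grind
    · exact terNim_ne_of_mem (N := ishape 1 t 0 e 1 u 0)
        (mem_TERmatOpt_ishape.2 ⟨by simp, by simp⟩) (terNim_eq_zero_of_not_edgeOK (by simp))
termination_by t + u + e

theorem terNim_ishape_top_corners_zero_eq_one_iff {t : ℕ} (e u : ℕ) (ht : 0 < t) :
    terNim (ishape 0 t 0 e 1 u 1) = 1 ↔ Odd (t + u + e) := by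
  constructor
  · intro h1
    by_contra heven
    obtain ⟨N, hN, hN1⟩ : ∃ N ∈ TERmatOpt (ishape 0 t 0 e 1 u 1), terNim N = 1 := by
      by_cases ht1 : 1 < t
      · refine ⟨ishape 0 (t - 1) 0 e 1 u 1, mem_TERmatOpt_ishape.2 ⟨by simp [ht], by simp [ht]⟩, ?_⟩
        exact (terNim_ishape_top_corners_zero_eq_one_iff e u (by omega : 0 < t - 1)).2 (by grind)
      rcases Nat.eq_zero_or_pos u with rfl | hu
      · have he : 0 < e := by grind
        refine ⟨ishape 0 t 0 (e - 1) 1 0 1, mem_TERmatOpt_ishape.2 ⟨by simp [ht], by simp [he]⟩, ?_⟩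
        exact (terNim_ishape_top_corners_zero_eq_one_iff (e - 1) 0 ht).2 (by grind)
      · refine ⟨ishape 0 t 0 e 1 (u - 1) 1, mem_TERmatOpt_ishape.2 ⟨by simp [ht], by simp [hu]⟩, ?_⟩
        exact (terNim_ishape_top_corners_zero_eq_one_iff e (u - 1) ht).2 (by grind)
    exact terNim_ne_of_mem hN hN1 h1
  · intro hodd
    have hE : edgeOK (ishape 0 t 0 e 1 u 1) := by simp [ht]
    refine terNim_eq_of (fun m hm => ⟨ishape 0 t 0 e 0 u 1, mem_TERmatOpt_ishape.2 ⟨hE, by simp⟩,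
      by rw [terNim_eq_zero_of_not_edgeOK (by simp)]; omega⟩) fun N hN => ?_
    rcases (mem_TERmatOpt_ishape.1 hN).2 with ⟨ha, rfl⟩ | ⟨-, rfl⟩ | ⟨hc, rfl⟩ | ⟨he, rfl⟩ |
      ⟨-, rfl⟩ | ⟨hu, rfl⟩ | ⟨-, rfl⟩
    · exact absurd ha (lt_irrefl 0)
    · rcases Nat.lt_or_ge 1 t with ht1 | ht1
      · rw [Ne, terNim_ishape_top_corners_zero_eq_one_iff e u (by omega : 0 < t - 1)]; grind
      · rw [terNim_eq_zero_of_not_edgeOK (by simp; omega)]; omega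
    · exact absurd hc (lt_irrefl 0)
    · rw [Ne, terNim_ishape_top_corners_zero_eq_one_iff (e - 1) u ht]; grind
    · rw [terNim_eq_zero_of_not_edgeOK (by simp)]; omega
    · rw [Ne, terNim_ishape_top_corners_zero_eq_one_iff e (u - 1) ht]; grind
    · rw [terNim_eq_zero_of_not_edgeOK (by simp)]; omega
termination_by t + u + e

theorem terNim_ishape_corners_one_eq_one {t u : ℕ} (e : ℕ) (ht : 0 < t) (hu : 0 < u)
    (hodd : Odd (t + u + e)) : terNim (ishape 1 t 1 e 1 u 1) = 1 := by
  have htop : terNim (ishape 0 t 0 e 1 u 1) = 1 :=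
    (terNim_ishape_top_corners_zero_eq_one_iff e u ht).2 hodd
  have hbot : terNim (ishape 1 t 1 e 0 u 0) = 1 := by
    rw [← rowRev_ishape, terNim_rowRev, terNim_ishape_top_corners_zero_eq_one_iff e t hu]
    rwa [add_comm u t]
  refine terNim_eq_of (fun m hm => ⟨ishape 1 (t - 1) 1 e 1 u 1,
    mem_TERmatOpt_ishape.2 ⟨by simp, by simp [ht]⟩,
    by rw [(terNim_ishape_corners_one_eq_zero_iff _ e u).2 (by grind)]; omega⟩) fun N hN => ?_
  rcases (mem_TERmatOpt_ishape.1 hN).2 with ⟨-, rfl⟩ | ⟨-, rfl⟩ | ⟨-, rfl⟩ | ⟨he, rfl⟩ |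
    ⟨-, rfl⟩ | ⟨-, rfl⟩ | ⟨-, rfl⟩
  · exact terNim_ne_of_mem (mem_TERmatOpt_ishape.2 ⟨by simp, by simp⟩) htop
  · rw [(terNim_ishape_corners_one_eq_zero_iff _ e u).2 (by grind)]; omega
  · exact terNim_ne_of_mem (mem_TERmatOpt_ishape.2 ⟨by simp, by simp⟩) htop
  · rw [(terNim_ishape_corners_one_eq_zero_iff t _ u).2 (by grind)]; omega
  · exact terNim_ne_of_mem (mem_TERmatOpt_ishape.2 ⟨by simp, by simp⟩) hbot
  · rw [(terNim_ishape_corners_one_eq_zero_iff t e _).2 (by grind)]; omega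
  · exact terNim_ne_of_mem (mem_TERmatOpt_ishape.2 ⟨by simp, by simp⟩) hbot

/-- (Middle game A) If `b ≥ 2`, then `nim(TER([[1,b,1],[0,1,0],[1,b,1]])) = 1`. -/
theorem TER_middle_game_A (b : ℕ) (hb : 2 ≤ b) :
    nimTERmat ![![1, b, 1], ![0, 1, 0], ![1, b, 1]] = 1 :=
  terNim_ishape_corners_one_eq_one 1 (by omega) (by omega) ⟨b, by ring⟩
end

section
/- (Middle game B) If a ≥ 2, then nim(TER(M)) = 1 for M = [[0,a,1],[1,1,1],[1,a,0]]. -/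
/-!
Moves preserve the shape `[[0,x,c],[d,e,f],[g,y,0]]` with `c, d, f, g ≤ 1`, and such a position
is non-terminal exactly when its positive entries cover the edges of the two paths `x – c – f` and
`d – g – y`. Apart from emptying one of these entries, every move only spends a pass move stored
in `e` or in the surplus of `x` and `y`. Accordingly the nim-value of a non-terminal position is
`q + 1`, `q + 3` or `q` according as `0`, `1` or `2` of the paths have all entries positive, where
`q` is the parity of `x + d + e + f + y`. This formula only sees signs and parities of entries, so
its mex recursion reduces to the matrices with entries below `4`, where it is checked by
evaluation. The starting matrix has two full paths and `q = 1`.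
-/

theorem mex_eq_of_forall_lt_mem_s12 {S : Set ℕ} {k : ℕ} (h : ∀ j < k, j ∈ S) (hk : k ∉ S) :
    mex S = k :=
  le_antisymm (Nat.sInf_le hk) (le_csInf ⟨k, hk⟩ fun _ hn => not_lt.1 fun hlt => hn (h _ hlt))

namespace GameGraph

theorem nim_eq_mex_s12 (G : GameGraph) (p : G.Pos) : G.nim p = mex (G.nim '' G.opt p) := by
  conv_lhs => rw [nim, WellFounded.fix_eq]
  congr 1
  ext n
  exact exists_congr fun _ => exists_prop

theorem nim_eq_of_mex_eq (G : GameGraph) {S : Set G.Pos} (hS : ∀ p ∈ S, G.opt p ⊆ S)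
    {v : G.Pos → ℕ} (hv : ∀ p ∈ S, v p = mex (v '' G.opt p)) {p : G.Pos} (hp : p ∈ S) :
    G.nim p = v p := by
  induction p using G.wf.induction with
  | _ p ih =>
    rw [nim_eq_mex_s12, hv p hp]
    exact congrArg mex (Set.image_congr fun q hq => ih q hq (hS p hp hq))

end GameGraph

instance : DecidablePred edgeOK := fun M => by
  unfold edgeOK
  infer_instance

theorem decEntry_le (M : Mat3) (i j a b : Fin 3) : decEntry M i j a b ≤ M a b := by
  unfold decEntry
  split <;> omega

/-- A decidable sufficient condition for `v M = mex (v '' TERmatOpt M)`. -/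
def MexRuleAt (v : Mat3 → ℕ) (M : Mat3) : Prop :=
  (∀ n < v M, edgeOK M ∧ ∃ i j, 0 < M i j ∧ v (decEntry M i j) = n) ∧
    ¬(edgeOK M ∧ ∃ i j, 0 < M i j ∧ v (decEntry M i j) = v M)

instance (v : Mat3 → ℕ) : DecidablePred (MexRuleAt v) := fun M => by
  unfold MexRuleAt
  infer_instance

theorem MexRuleAt.eq_mex {v : Mat3 → ℕ} {M : Mat3} (h : MexRuleAt v M) :
    v M = mex (v '' TERmatOpt M) := by
  have mem_iff : ∀ n, n ∈ v '' TERmatOpt M ↔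
      edgeOK M ∧ ∃ i j, 0 < M i j ∧ v (decEntry M i j) = n := fun n => by
    simp only [Set.mem_image, TERmatOpt, matMoves, Set.mem_ofPred_eq]
    constructor
    · rintro ⟨_, ⟨hM, i, j, hij, rfl⟩, rfl⟩
      exact ⟨hM, i, j, hij, rfl⟩
    · rintro ⟨hM, i, j, hij, rfl⟩
      exact ⟨_, ⟨hM, i, j, hij, rfl⟩, rfl⟩
  exact (mex_eq_of_forall_lt_mem_s12 (fun n hn => (mem_iff n).2 (h.1 n hn))
    (fun hmem => h.2 ((mem_iff _).1 hmem))).symm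

def middleShape : Set Mat3 :=
  {M | M 0 0 = 0 ∧ M 2 2 = 0 ∧ M 0 2 ≤ 1 ∧ M 1 0 ≤ 1 ∧ M 1 2 ≤ 1 ∧ M 2 0 ≤ 1}

theorem TERmatOpt_subset_middleShape {M : Mat3} (hM : M ∈ middleShape) :
    TERmatOpt M ⊆ middleShape := by
  rintro _ ⟨-, i, j, -, rfl⟩
  have := decEntry_le M i j
  obtain ⟨_, _, _, _, _, _⟩ := hM
  refine ⟨?_, ?_, ?_, ?_, ?_, ?_⟩ <;> grind

def fullPaths (M : Mat3) : ℕ :=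
  (if 0 < M 0 1 ∧ 0 < M 0 2 ∧ 0 < M 1 2 then 1 else 0) +
    (if 0 < M 1 0 ∧ 0 < M 2 0 ∧ 0 < M 2 1 then 1 else 0)

def terValue (M : Mat3) : ℕ :=
  if edgeOK M then
    let q := (M 0 1 + M 1 0 + M 1 1 + M 1 2 + M 2 1) % 2
    match fullPaths M with
    | 0 => q + 1
    | 1 => q + 3
    | _ => q
  else 0

def SameSignParity (M N : Mat3) : Prop :=
  ∀ a b, (0 < M a b ↔ 0 < N a b) ∧ M a b % 2 = N a b % 2

namespace SameSignParity

variable {M N : Mat3}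

theorem edgeOK_iff (h : SameSignParity M N) : edgeOK M ↔ edgeOK N := by
  simp only [edgeOK, add_pos_iff, fun a b => (h a b).1]

theorem fullPaths_eq (h : SameSignParity M N) : fullPaths M = fullPaths N := by
  simp only [fullPaths, fun a b => (h a b).1]

theorem terValue_eq (h : SameSignParity M N) : terValue M = terValue N := by
  have hq : (M 0 1 + M 1 0 + M 1 1 + M 1 2 + M 2 1) % 2 =
      (N 0 1 + N 1 0 + N 1 1 + N 1 2 + N 2 1) % 2 := by
    have := (h 0 1).2; have := (h 1 0).2; have := (h 1 1).2; have := (h 1 2).2; have := (h 2 1).2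
    omega
  simp only [terValue, h.edgeOK_iff, h.fullPaths_eq, hq]

end SameSignParity

def reduceEntry (n : ℕ) : ℕ := if n < 2 then n else n % 2 + 2

def reduceMat (M : Mat3) : Mat3 := fun a b => reduceEntry (M a b)

theorem sameSignParity_reduceMat (M : Mat3) : SameSignParity (reduceMat M) M := by
  intro a b
  simp only [reduceMat, reduceEntry]
  split <;> omega

/-- Moves do not preserve `SameSignParity` in general (`1` and `3` become `0` and `2`), but
`reduceEntry` sends entries `≥ 2` to entries `≥ 2`. -/
theorem sameSignParity_decEntry_reduceMat (M : Mat3) (i j : Fin 3) :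
    SameSignParity (decEntry (reduceMat M) i j) (decEntry M i j) := by
  intro a b
  simp only [decEntry, reduceMat, reduceEntry]
  split_ifs <;> omega

theorem mexRuleAt_reduceMat_iff (M : Mat3) :
    MexRuleAt terValue (reduceMat M) ↔ MexRuleAt terValue M := by
  have h := sameSignParity_reduceMat M
  simp only [MexRuleAt, h.terValue_eq, h.edgeOK_iff, fun a b => (h a b).1,
    fun i j => (sameSignParity_decEntry_reduceMat M i j).terValue_eq]

set_option synthInstance.maxSize 2000 in
theorem mexRuleAt_terValue_of_small :
    ∀ x < 4, ∀ c < 2, ∀ d < 2, ∀ e < 4, ∀ f < 2, ∀ g < 2, ∀ y < 4,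
      MexRuleAt terValue ![![0, x, c], ![d, e, f], ![g, y, 0]] := by
  decide

theorem terValue_eq_mex {M : Mat3} (hM : M ∈ middleShape) :
    terValue M = mex (terValue '' TERmatOpt M) := by
  obtain ⟨h00, h22, h02, h10, h12, h20⟩ := hM
  have reduceEntry_lt_four : ∀ n, reduceEntry n < 4 := fun n => by
    unfold reduceEntry
    split <;> omega
  have reduceEntry_of_le_one : ∀ n ≤ 1, reduceEntry n = n := fun n hn => if_pos (by omega)
  have hred : reduceMat M = ![![0, reduceEntry (M 0 1), M 0 2],
      ![M 1 0, reduceEntry (M 1 1), M 1 2], ![M 2 0, reduceEntry (M 2 1), 0]] := by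
    ext a b
    fin_cases a <;> fin_cases b <;> simp [reduceMat, *]
  refine MexRuleAt.eq_mex ((mexRuleAt_reduceMat_iff M).1 ?_)
  rw [hred]
  exact mexRuleAt_terValue_of_small _ (reduceEntry_lt_four _) _ (by omega) _ (by omega)
    _ (reduceEntry_lt_four _) _ (by omega) _ (by omega) _ (reduceEntry_lt_four _)

theorem nim_TERmat_eq_terValue (M₀ : Mat3) {M : Mat3} (hM : M ∈ middleShape) :
    (TERmat M₀).nim M = terValue M :=
  (TERmat M₀).nim_eq_of_mex_eq (fun _ hp => TERmatOpt_subset_middleShape hp)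
    (fun _ hp => terValue_eq_mex hp) hM

/-- (Middle game B) If `a ≥ 2`, then `nim(TER([[0,a,1],[1,1,1],[1,a,0]])) = 1`. -/
theorem TER_middle_game_B (a : ℕ) (ha : 2 ≤ a) :
    nimTERmat ![![0, a, 1], ![1, 1, 1], ![1, a, 0]] = 1 := by
  have hM : ![![0, a, 1], ![1, 1, 1], ![1, a, 0]] ∈ middleShape := by simp [middleShape]
  refine (nim_TERmat_eq_terValue _ hM).trans ?_
  have hpos : 0 < a := by omega
  have hparity : (a + 1 + 1 + 1 + a) % 2 = 1 := by omega
  simp [terValue, edgeOK, fullPaths, hpos, hparity]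
end

section
/- For every lattice graph Γ = P_{n₁}□⋯□P_{n_d} (with 2 ≤ n₁ ≤ ⋯ ≤ n_d and n_d ≥ 3), nim(DNT(Γ)) = pty(n₁⋯n_d), where pty denotes reduction mod 2. -/
/-- A vertex set `K` is geodetically convex if it contains every vertex on a
geodesic (shortest path) between two of its vertices; in a connected graph,
`w` lies on a geodesic from `u` to `v` iff `dist u w + dist w v = dist u v`. -/
def geoConvex {V : Type} (G : SimpleGraph V) (K : Set V) : Prop :=
  ∀ u ∈ K, ∀ v ∈ K, ∀ w, G.dist u w + G.dist w v = G.dist u v → w ∈ K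

/-- The geodetic convex hull: the intersection of all convex sets containing `S`. -/
def geoHull {V : Type} (G : SimpleGraph V) (S : Set V) : Set V :=
  ⋂₀ {K | geoConvex G K ∧ S ⊆ K}

section Games
variable {V : Type} [Fintype V] [DecidableEq V]

/-- Options in the avoidance game `DNT(Γ)`: select an unselected vertex so that the
convex hull of the remaining unselected vertices is still the whole vertex set. -/
def DNTgraphOpt (G : SimpleGraph V) (P : Finset V) : Set (Finset V) :=
  {Q | ∃ v, v ∉ P ∧ Q = insert v P ∧
    geoHull G ((↑(insert v P) : Set V)ᶜ) = Set.univ}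

/-- Options in the achievement game `TER(Γ)`: a position whose unselected vertices
have convex hull smaller than the whole vertex set is terminal; otherwise any
unselected vertex may be selected. -/
def TERgraphOpt (G : SimpleGraph V) (P : Finset V) : Set (Finset V) :=
  {Q | geoHull G ((↑P : Set V)ᶜ) = Set.univ ∧ ∃ v, v ∉ P ∧ Q = insert v P}

theorem graphWF {opt : Finset V → Set (Finset V)}
    (h : ∀ P Q, Q ∈ opt P → ∃ v, v ∉ P ∧ Q = insert v P) :
    WellFounded fun Q P => Q ∈ opt P := by
  have hsub : Subrelation (fun Q P : Finset V => Q ∈ opt P)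
      (InvImage (· < ·) (fun P : Finset V => Fintype.card V - P.card)) := by
    intro Q P hQP
    obtain ⟨v, hv, rfl⟩ := h P Q hQP
    have h1 : (insert v P).card = P.card + 1 := Finset.card_insert_of_notMem hv
    have h2 : (insert v P).card ≤ Fintype.card V := Finset.card_le_univ _
    show Fintype.card V - (insert v P).card < Fintype.card V - P.card
    omega
  exact Subrelation.wf hsub (InvImage.wf _ Nat.lt_wfRel.wf)

/-- The gamegraph of the avoidance game `DNT(Γ)`; positions are the sets of jointly
selected vertices and the starting position is `∅`. -/
def DNTgame (G : SimpleGraph V) : GameGraph :=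
  ⟨Finset V, DNTgraphOpt G,
    graphWF (by rintro P Q ⟨v, hv, rfl, -⟩; exact ⟨v, hv, rfl⟩), ∅⟩

/-- The gamegraph of the achievement game `TER(Γ)`; positions are the sets of jointly
selected vertices and the starting position is `∅`. -/
def TERgame (G : SimpleGraph V) : GameGraph :=
  ⟨Finset V, TERgraphOpt G,
    graphWF (by rintro P Q ⟨-, v, hv, rfl⟩; exact ⟨v, hv, rfl⟩), ∅⟩

end Games

/-- The `d`-dimensional lattice graph `P_{n 0} □ ⋯ □ P_{n (d-1)}`: two vertices are
adjacent iff they differ by one in exactly one coordinate. -/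
def latticeGraph (d : ℕ) (n : Fin d → ℕ) : SimpleGraph (∀ i, Fin (n i)) where
  Adj x y := ∃ i, ((x i).val + 1 = (y i).val ∨ (y i).val + 1 = (x i).val) ∧
    ∀ j, j ≠ i → x j = y j
  symm := by
    constructor
    rintro x y ⟨i, h1, h2⟩
    exact ⟨i, h1.symm, fun j hj => (h2 j hj).symm⟩
  loopless := by
    constructor
    rintro x ⟨i, h1, -⟩
    rcases h1 with h | h <;> omega


set_option linter.dupNamespace false

lemma mex_eq_zero_of_not_mem {S : Set ℕ} (h : 0 ∉ S) : mex S = 0 :=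
  Nat.le_zero.mp (Nat.sInf_le h)

lemma mex_not_mem {S : Set ℕ} (hfin : S.Finite) : mex S ∉ S :=
  Nat.sInf_mem (hfin.infinite_compl.nonempty)

lemma mex_eq_one {S : Set ℕ} (h0 : 0 ∈ S) (h1 : 1 ∉ S) : mex S = 1 := by
  have hle : mex S ≤ 1 := Nat.sInf_le h1
  have hne : mex S ≠ 0 := by
    intro h
    rcases Nat.sInf_eq_zero.mp h with h' | h'
    · exact h' h0
    · exact (Set.eq_empty_iff_forall_notMem.mp h' 1) h1
  omega

lemma GameGraph.nim_def (G : GameGraph) (p : G.Pos) :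
    G.nim p = mex {k : ℕ | ∃ q, ∃ _h : q ∈ G.opt p, G.nim q = k} := by
  unfold GameGraph.nim
  rw [WellFounded.fix_eq]

lemma optnims_finite (G : GameGraph) (hfin : Finite G.Pos) (p : G.Pos) :
    {k : ℕ | ∃ q, ∃ _h : q ∈ G.opt p, G.nim q = k}.Finite := by
  haveI := hfin
  apply (Set.finite_range G.nim).subset
  rintro k ⟨q, _, rfl⟩
  exact ⟨q, rfl⟩


namespace LatticeDNT

variable {d : ℕ} {n : Fin d → ℕ}

abbrev Vtx (n : Fin d → ℕ) := ∀ i, Fin (n i)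

def dsum (x y : Vtx n) : ℕ :=
  ∑ i, (((x i).val - (y i).val) + ((y i).val - (x i).val))

lemma dsum_self (x : Vtx n) : dsum x x = 0 := by
  simp [dsum]

lemma dsum_eq_zero_iff {x y : Vtx n} : dsum x y = 0 ↔ x = y := by
  constructor
  · intro h
    funext i
    have := Finset.sum_eq_zero_iff.mp h i (Finset.mem_univ i)
    exact Fin.ext (by omega)
  · rintro rfl; exact dsum_self x

lemma adj_dsum {x y : Vtx n} (h : (latticeGraph d n).Adj x y) : dsum x y = 1 := by
  obtain ⟨i, h1, h2⟩ := h
  unfold dsum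
  rw [Finset.sum_eq_single_of_mem i (Finset.mem_univ i)]
  · omega
  · intro j _ hj
    rw [h2 j hj]
    omega

lemma dsum_triangle (x y z : Vtx n) : dsum x z ≤ dsum x y + dsum y z := by
  unfold dsum
  rw [← Finset.sum_add_distrib]
  apply Finset.sum_le_sum
  intro i _
  omega

lemma dsum_le_walk_length {x y : Vtx n} (w : (latticeGraph d n).Walk x y) :
    dsum x y ≤ w.length := by
  induction w with
  | nil => simp [dsum_self]
  | cons h p ih =>
    rename_i a b c
    simp only [SimpleGraph.Walk.length_cons]
    have h1 := adj_dsum h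
    have h2 := dsum_triangle a b c
    omega

lemma exists_walk_dsum : ∀ (N : ℕ) (x y : Vtx n), dsum x y = N →
    ∃ w : (latticeGraph d n).Walk x y, w.length = N := by
  intro N
  induction N using Nat.strong_induction_on with
  | _ N ih =>
    intro x y hxy
    rcases Nat.eq_zero_or_pos N with rfl | hN
    · obtain rfl := dsum_eq_zero_iff.mp hxy
      exact ⟨SimpleGraph.Walk.nil, rfl⟩
    · -- find a coordinate where they differ
      have hne : x ≠ y := by
        rintro rfl; rw [dsum_self] at hxy; omega
      have : ∃ i, (x i).val ≠ (y i).val := by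
        by_contra h
        push_neg at h
        exact hne (funext fun i => Fin.ext (h i))
      obtain ⟨i, hi⟩ := this
      set a := (x i).val with ha
      set b := (y i).val with hb
      have hbn : b < n i := (y i).isLt
      have han : a < n i := (x i).isLt
      set c : ℕ := if a < b then a + 1 else a - 1 with hc
      have hcprop : (a < b ∧ c = a + 1) ∨ (b < a ∧ c = a - 1) := by
        rw [hc]; split <;> omega
      have hcn : c < n i := by omega
      set x' : Vtx n := Function.update x i ⟨c, hcn⟩ with hx'
      have hadj : (latticeGraph d n).Adj x x' := by
        refine ⟨i, ?_, fun j hj => (Function.update_of_ne hj _ x).symm⟩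
        rw [hx', Function.update_self]
        simp only
        omega
      have hterm : ∀ j, j ≠ i → x' j = x j := fun j hj => Function.update_of_ne hj _ x
      have hsum : dsum x y = dsum x' y + 1 := by
        unfold dsum
        rw [← Finset.add_sum_erase _ _ (Finset.mem_univ i),
            ← Finset.add_sum_erase _ _ (Finset.mem_univ i)]
        have hrest : ∑ j ∈ Finset.univ.erase i,
            (((x j).val - (y j).val) + ((y j).val - (x j).val)) =
            ∑ j ∈ Finset.univ.erase i,
            (((x' j).val - (y j).val) + ((y j).val - (x' j).val)) := by
          apply Finset.sum_congr rfl
          intro j hj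
          rw [hterm j (Finset.ne_of_mem_erase hj)]
        rw [hrest]
        have hx'i : (x' i).val = c := by rw [hx', Function.update_self]
        rw [hx'i]
        omega
      obtain ⟨w, hw⟩ := ih (N - 1) (by omega) x' y (by omega)
      exact ⟨SimpleGraph.Walk.cons hadj w, by
        simp [SimpleGraph.Walk.length_cons, hw]; omega⟩

lemma lattice_reachable (x y : Vtx n) : (latticeGraph d n).Reachable x y := by
  obtain ⟨w, -⟩ := exists_walk_dsum (dsum x y) x y rfl
  exact ⟨w⟩

lemma dist_eq_dsum (x y : Vtx n) : (latticeGraph d n).dist x y = dsum x y := by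
  apply le_antisymm
  · obtain ⟨w, hw⟩ := exists_walk_dsum (dsum x y) x y rfl
    exact hw ▸ SimpleGraph.dist_le w
  · obtain ⟨w, hw⟩ := (lattice_reachable x y).exists_walk_length_eq_dist
    exact hw ▸ dsum_le_walk_length w

/-- The coordinatewise geodesic betweenness equation. -/
lemma dist_add_eq_iff (u v w : Vtx n) :
    (latticeGraph d n).dist u w + (latticeGraph d n).dist w v = (latticeGraph d n).dist u v ↔
    ∀ i, (((u i).val - (w i).val) + ((w i).val - (u i).val)) +
        (((w i).val - (v i).val) + ((v i).val - (w i).val)) =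
        (((u i).val - (v i).val) + ((v i).val - (u i).val)) := by
  rw [dist_eq_dsum, dist_eq_dsum, dist_eq_dsum]
  unfold dsum
  rw [← Finset.sum_add_distrib]
  rw [show (∑ i, (((u i).val - (v i).val) + ((v i).val - (u i).val))) =
    ∑ i, (((u i).val - (v i).val) + ((v i).val - (u i).val)) from rfl]
  constructor
  · intro h i
    have hle : ∀ i ∈ Finset.univ,
        (((u i).val - (v i).val) + ((v i).val - (u i).val)) ≤
        (((u i).val - (w i).val) + ((w i).val - (u i).val)) +
        (((w i).val - (v i).val) + ((v i).val - (w i).val)) := by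
      intro i _; omega
    have := (Finset.sum_eq_sum_iff_of_le hle).mp h.symm i (Finset.mem_univ i)
    omega
  · intro h
    apply Finset.sum_congr rfl
    intro i _
    exact h i

-- appended to chunk2 content (within namespace LatticeDNT, after dist_add_eq_iff)

def Spanning (S : Set (Vtx n)) : Prop :=
  ∀ i, (∃ u ∈ S, (u i).val = 0) ∧ (∃ u ∈ S, (u i).val = n i - 1)

section Hull

/-- convex sets are closed under coordinatewise min -/
lemma pmin_mem {K : Set (Vtx n)} (hK : geoConvex (latticeGraph d n) K)
    {u v : Vtx n} (hu : u ∈ K) (hv : v ∈ K) :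
    (fun i => (⟨min (u i).val (v i).val,
      lt_of_le_of_lt (min_le_left _ _) (u i).isLt⟩ : Fin (n i))) ∈ K := by
  apply hK u hu v hv
  rw [dist_add_eq_iff]
  intro i
  simp only
  omega

lemma pmax_mem {K : Set (Vtx n)} (hK : geoConvex (latticeGraph d n) K)
    {u v : Vtx n} (hu : u ∈ K) (hv : v ∈ K) :
    (fun i => (⟨max (u i).val (v i).val,
      max_lt (u i).isLt (v i).isLt⟩ : Fin (n i))) ∈ K := by
  apply hK u hu v hv
  rw [dist_add_eq_iff]
  intro i
  simp only
  omega

lemma fold_min {K : Set (Vtx n)} (hK : geoConvex (latticeGraph d n) K)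
    (a : Fin d → Vtx n) (ha : ∀ i, a i ∈ K) :
    ∀ T : Finset (Fin d), T.Nonempty →
      ∃ m ∈ K, ∀ i ∈ T, ∀ j, (m j).val ≤ ((a i) j).val := by
  intro T
  induction T using Finset.induction_on with
  | empty => rintro ⟨i, hi⟩; exact absurd hi (Finset.notMem_empty i)
  | insert _ _ hiT =>
    rename_i i T ih
    intro _
    by_cases hT : T.Nonempty
    · obtain ⟨m, hm, hmle⟩ := ih hT
      refine ⟨_, pmin_mem hK (ha i) hm, ?_⟩
      intro i' hi' j
      rcases Finset.mem_insert.mp hi' with rfl | hi'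
      · exact min_le_left _ _
      · exact le_trans (min_le_right _ _) (hmle i' hi' j)
    · refine ⟨a i, ha i, ?_⟩
      intro i' hi' j
      rcases Finset.mem_insert.mp hi' with rfl | hi'
      · exact le_refl _
      · exact absurd ⟨i', hi'⟩ hT

lemma fold_max {K : Set (Vtx n)} (hK : geoConvex (latticeGraph d n) K)
    (a : Fin d → Vtx n) (ha : ∀ i, a i ∈ K) :
    ∀ T : Finset (Fin d), T.Nonempty →
      ∃ m ∈ K, ∀ i ∈ T, ∀ j, ((a i) j).val ≤ (m j).val := by
  intro T
  induction T using Finset.induction_on with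
  | empty => rintro ⟨i, hi⟩; exact absurd hi (Finset.notMem_empty i)
  | insert _ _ hiT =>
    rename_i i T ih
    intro _
    by_cases hT : T.Nonempty
    · obtain ⟨m, hm, hmle⟩ := ih hT
      refine ⟨_, pmax_mem hK (ha i) hm, ?_⟩
      intro i' hi' j
      rcases Finset.mem_insert.mp hi' with rfl | hi'
      · exact le_max_left _ _
      · exact le_trans (hmle i' hi' j) (le_max_right _ _)
    · refine ⟨a i, ha i, ?_⟩
      intro i' hi' j
      rcases Finset.mem_insert.mp hi' with rfl | hi'
      · exact le_refl _
      · exact absurd ⟨i', hi'⟩ hT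

lemma hull_eq_univ_iff (hd : 0 < d) (h1 : ∀ i, 1 ≤ n i) (S : Set (Vtx n)) :
    geoHull (latticeGraph d n) S = Set.univ ↔ Spanning S := by
  constructor
  · intro h
    intro i
    constructor
    · -- use the convex set {x | ∃ u ∈ S, u i ≤ x i}
      set K : Set (Vtx n) := {x | ∃ u ∈ S, (u i).val ≤ (x i).val} with hKdef
      have hKconv : geoConvex (latticeGraph d n) K := by
        intro u hu v hv w hw
        have hb := (dist_add_eq_iff u v w).mp hw i
        rcases le_total (u i).val (v i).val with hle | hle
        · obtain ⟨s, hs, hsi⟩ := hu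
          exact ⟨s, hs, by omega⟩
        · obtain ⟨s, hs, hsi⟩ := hv
          exact ⟨s, hs, by omega⟩
      have hsub : S ⊆ K := fun u hu => ⟨u, hu, le_refl _⟩
      have : geoHull (latticeGraph d n) S ⊆ K :=
        Set.sInter_subset_of_mem ⟨hKconv, hsub⟩
      rw [h] at this
      have hx : (fun j => (⟨0, h1 j⟩ : Fin (n j))) ∈ K := this (Set.mem_univ _)
      obtain ⟨u, hu, hui⟩ := hx
      exact ⟨u, hu, by simpa using hui⟩
    · set K : Set (Vtx n) := {x | ∃ u ∈ S, (x i).val ≤ (u i).val} with hKdef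
      have hKconv : geoConvex (latticeGraph d n) K := by
        intro u hu v hv w hw
        have hb := (dist_add_eq_iff u v w).mp hw i
        rcases le_total (u i).val (v i).val with hle | hle
        · obtain ⟨s, hs, hsi⟩ := hv
          exact ⟨s, hs, by omega⟩
        · obtain ⟨s, hs, hsi⟩ := hu
          exact ⟨s, hs, by omega⟩
      have hsub : S ⊆ K := fun u hu => ⟨u, hu, le_refl _⟩
      have : geoHull (latticeGraph d n) S ⊆ K :=
        Set.sInter_subset_of_mem ⟨hKconv, hsub⟩
      rw [h] at this
      have hx : (fun j => (⟨n j - 1, by have := h1 j; omega⟩ : Fin (n j))) ∈ K :=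
        this (Set.mem_univ _)
      obtain ⟨u, hu, hui⟩ := hx
      refine ⟨u, hu, ?_⟩
      have := (u i).isLt
      simp only at hui
      omega
  · intro hsp
    rw [geoHull, Set.sInter_eq_univ]
    rintro K ⟨hKconv, hSK⟩
    -- bottom point
    have hbot : (fun j => (⟨0, h1 j⟩ : Fin (n j))) ∈ K := by
      choose a ha h0 using fun i => (hsp i).1
      obtain ⟨m, hm, hmle⟩ := fold_min hKconv a (fun i => hSK (ha i)) Finset.univ
        ⟨⟨0, hd⟩, Finset.mem_univ _⟩
      have : m = (fun j => (⟨0, h1 j⟩ : Fin (n j))) := by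
        funext j
        have := hmle j (Finset.mem_univ j) j
        rw [h0 j] at this
        exact Fin.ext (by show (m j).val = 0; omega)
      rwa [this] at hm
    have htop : (fun j => (⟨n j - 1, by have := h1 j; omega⟩ : Fin (n j))) ∈ K := by
      choose a ha h0 using fun i => (hsp i).2
      obtain ⟨m, hm, hmle⟩ := fold_max hKconv a (fun i => hSK (ha i)) Finset.univ
        ⟨⟨0, hd⟩, Finset.mem_univ _⟩
      have : m = (fun j => (⟨n j - 1, by have := h1 j; omega⟩ : Fin (n j))) := by
        funext j
        have h' := hmle j (Finset.mem_univ j) j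
        rw [h0 j] at h'
        have := (m j).isLt
        exact Fin.ext (by show (m j).val = n j - 1; omega)
      rwa [this] at hm
    apply Set.eq_univ_of_forall
    intro x
    apply hKconv _ hbot _ htop x
    rw [dist_add_eq_iff]
    intro i
    have := (x i).isLt
    have := h1 i
    simp only
    omega

end Hull


/-! ### The central symmetry and the game argument -/

def rho (x : Vtx n) : Vtx n := fun i => ⟨n i - 1 - (x i).val, by have := (x i).isLt; omega⟩

lemma rho_rho (x : Vtx n) : rho (rho x) = x := by
  funext i
  refine Fin.ext ?_
  show n i - 1 - (n i - 1 - (x i).val) = (x i).val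
  have := (x i).isLt
  omega

lemma rho_inj {x y : Vtx n} (h : rho x = rho y) : x = y := by
  have := congrArg rho h
  rwa [rho_rho, rho_rho] at this

lemma compl_insert_coe (P : Finset (Vtx n)) (v : Vtx n) :
    ((↑(insert v P) : Set (Vtx n)))ᶜ = (↑P : Set (Vtx n))ᶜ \ {v} := by
  ext x
  simp only [Set.mem_compl_iff, Finset.coe_insert, Set.mem_insert_iff, Finset.mem_coe,
    Set.mem_diff, Set.mem_singleton_iff]
  tauto

lemma mirror_span (h2 : ∀ i, 2 ≤ n i) (S : Set (Vtx n)) (hS : ∀ x ∈ S, rho x ∈ S)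
    (v : Vtx n) (hsp : Spanning (S \ {v})) : Spanning ((S \ {v}) \ {rho v}) := by
  intro i
  obtain ⟨⟨w, ⟨hwS, hwv⟩, hw0⟩, ⟨w', ⟨hw'S, hw'v⟩, hw'M⟩⟩ := hsp i
  rw [Set.mem_singleton_iff] at hwv hw'v
  have hrv : ∀ z : Vtx n, (rho z i).val = n i - 1 - (z i).val := fun z => rfl
  constructor
  · by_cases hwρ : w = rho v
    · have hw'ρ : w' ≠ rho v := by
        intro h
        rw [hwρ] at hw0; rw [h] at hw'M
        rw [hrv] at hw0 hw'M
        have := (v i).isLt; have := h2 i; omega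
      refine ⟨rho w', ⟨⟨hS w' hw'S, ?_⟩, ?_⟩, ?_⟩
      · rw [Set.mem_singleton_iff]
        intro h; exact hw'ρ (by rw [← h, rho_rho])
      · rw [Set.mem_singleton_iff]
        intro h; exact hw'v (rho_inj h)
      · rw [hrv, hw'M]; omega
    · exact ⟨w, ⟨⟨hwS, fun h => hwv (Set.mem_singleton_iff.mp h)⟩,
        fun h => hwρ (Set.mem_singleton_iff.mp h)⟩, hw0⟩
  · by_cases hw'ρ : w' = rho v
    · have hwρ : w ≠ rho v := by
        intro h
        rw [hw'ρ] at hw'M; rw [h] at hw0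
        rw [hrv] at hw0 hw'M
        have := (v i).isLt; have := h2 i; omega
      refine ⟨rho w, ⟨⟨hS w hwS, ?_⟩, ?_⟩, ?_⟩
      · rw [Set.mem_singleton_iff]
        intro h; exact hwρ (by rw [← h, rho_rho])
      · rw [Set.mem_singleton_iff]
        intro h; exact hwv (rho_inj h)
      · rw [hrv, hw0]; omega
    · exact ⟨w', ⟨⟨hw'S, fun h => hw'v (Set.mem_singleton_iff.mp h)⟩,
        fun h => hw'ρ (Set.mem_singleton_iff.mp h)⟩, hw'M⟩

section GameArg

lemma opt_iff (hd : 0 < d) (h2 : ∀ i, 2 ≤ n i) {P Q : Finset (Vtx n)} :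
    Q ∈ DNTgraphOpt (latticeGraph d n) P ↔
    ∃ v, v ∉ P ∧ Q = insert v P ∧ Spanning ((↑(insert v P) : Set (Vtx n))ᶜ) := by
  have h1 : ∀ i, 1 ≤ n i := fun i => le_trans one_le_two (h2 i)
  constructor
  · rintro ⟨v, hv, hQ, hhull⟩
    exact ⟨v, hv, hQ, (hull_eq_univ_iff hd h1 _).mp hhull⟩
  · rintro ⟨v, hv, hQ, hsp⟩
    exact ⟨v, hv, hQ, (hull_eq_univ_iff hd h1 _).mpr hsp⟩

lemma nim_ne (G : GameGraph) (hfin : Finite G.Pos) {p q : G.Pos} (h : q ∈ G.opt p) :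
    G.nim p ≠ G.nim q := by
  rw [G.nim_def p]
  intro he
  exact mex_not_mem (optnims_finite G hfin p) (he ▸ ⟨q, h, rfl⟩)

/-- The mirror move: from a symmetric position `P`, if the opponent plays `v`,
then `rho v` is a legal response leading to a symmetric position. -/
lemma mirror_opt (hd : 0 < d) (h2 : ∀ i, 2 ≤ n i) {P : Finset (Vtx n)} (hsym : ∀ x, x ∈ P ↔ rho x ∈ P)
    {v : Vtx n} (hρvne : rho v ≠ v) (hv : v ∉ P)
    (hsp : Spanning ((↑(insert v P) : Set (Vtx n))ᶜ)) :
    rho v ∉ insert v P ∧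
    insert (rho v) (insert v P) ∈ DNTgraphOpt (latticeGraph d n) (insert v P) ∧
    (∀ x, x ∈ insert (rho v) (insert v P) ↔ rho x ∈ insert (rho v) (insert v P)) ∧
    (insert (rho v) (insert v P)).card = P.card + 2 := by
  have hρvP : rho v ∉ P := by
    intro h
    exact hv (by have := (hsym (rho v)).mp h; rwa [rho_rho] at this)
  have hρvQ : rho v ∉ insert v P := by
    rw [Finset.mem_insert]; push_neg; exact ⟨hρvne, hρvP⟩
  have hS : ∀ x ∈ ((↑P : Set (Vtx n))ᶜ), rho x ∈ (↑P : Set (Vtx n))ᶜ := by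
    intro x hx h
    exact hx ((hsym x).mpr (Finset.mem_coe.mp h))
  have hsp' : Spanning ((↑P : Set (Vtx n))ᶜ \ {v}) := by rwa [compl_insert_coe] at hsp
  have hspR := mirror_span h2 _ hS v hsp'
  refine ⟨hρvQ, ?_, ?_, ?_⟩
  · exact (opt_iff hd h2).mpr ⟨rho v, hρvQ, rfl, by
      rw [compl_insert_coe, compl_insert_coe]; exact hspR⟩
  · intro x
    simp only [Finset.mem_insert]
    constructor
    · rintro (rfl | rfl | h)
      · right; left; rw [rho_rho]
      · left; rfl
      · right; right; exact (hsym x).mp h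
    · rintro (h | h | h)
      · right; left; exact rho_inj h
      · left; rw [← h, rho_rho]
      · right; right; exact (hsym x).mpr h
  · rw [Finset.card_insert_of_notMem hρvQ, Finset.card_insert_of_notMem hv]

lemma even_main (hd : 0 < d) (h2 : ∀ i, 2 ≤ n i) (i0 : Fin d) (hE : n i0 % 2 = 0) :
    ∀ k (P : Finset (Vtx n)), Fintype.card (Vtx n) - P.card ≤ k →
    (∀ x, x ∈ P ↔ rho x ∈ P) → (DNTgame (latticeGraph d n)).nim P = 0 := by
  intro k
  induction k with
  | zero =>
    intro P hcard _
    refine (GameGraph.nim_def _ _).trans ?_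
    apply mex_eq_zero_of_not_mem
    rintro ⟨Q, hQ, -⟩
    obtain ⟨v, hv, rfl, -⟩ := (opt_iff hd h2).mp hQ
    have h' : (insert v P).card ≤ Fintype.card (Vtx n) := Finset.card_le_univ _
    have := Finset.card_insert_of_notMem hv
    omega
  | succ k ih =>
    intro P hcard hsym
    refine (GameGraph.nim_def _ _).trans ?_
    apply mex_eq_zero_of_not_mem
    rintro ⟨Q, hQ, hQ0⟩
    obtain ⟨v, hv, rfl, hsp⟩ := (opt_iff hd h2).mp hQ
    have hρvne : rho v ≠ v := by
      intro h
      have hval : n i0 - 1 - (v i0).val = (v i0).val := congrArg Fin.val (congrFun h i0)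
      have := (v i0).isLt
      have := h2 i0
      omega
    obtain ⟨hρvQ, hRopt, hsymR, hcR⟩ := mirror_opt hd h2 hsym hρvne hv hsp
    have hle : (insert (rho v) (insert v P)).card ≤ Fintype.card (Vtx n) :=
      Finset.card_le_univ _
    have hnimR := ih (insert (rho v) (insert v P)) (by omega) hsymR
    have hne := nim_ne (DNTgame (latticeGraph d n))
      (inferInstanceAs (Finite (Finset (Vtx n)))) hRopt
    exact hne (by rw [hQ0, hnimR])


/-! ### The odd case -/

def center (h2 : ∀ i, 2 ≤ n i) : Vtx n := fun i => ⟨(n i - 1) / 2, by have := h2 i; omega⟩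

lemma rho_center (h2 : ∀ i, 2 ≤ n i) (hodd : ∀ i, n i % 2 = 1) :
    rho (center h2) = center h2 := by
  funext i
  refine Fin.ext ?_
  show n i - 1 - (n i - 1) / 2 = (n i - 1) / 2
  have := hodd i; have := h2 i
  omega

lemma fix_eq_center (h2 : ∀ i, 2 ≤ n i) {v : Vtx n} (h : rho v = v) : v = center h2 := by
  funext i
  refine Fin.ext ?_
  have hval : n i - 1 - (v i).val = (v i).val := congrArg Fin.val (congrFun h i)
  show (v i).val = (n i - 1) / 2
  have := (v i).isLt
  omega

lemma span_diff_center (h2 : ∀ i, 2 ≤ n i) (h3 : ∀ i, 3 ≤ n i) {S : Set (Vtx n)}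
    (hsp : Spanning S) : Spanning (S \ {center h2}) := by
  intro i
  obtain ⟨⟨w, hw, h0⟩, ⟨w', hw', hM⟩⟩ := hsp i
  have h3i := h3 i
  constructor
  · refine ⟨w, ⟨hw, ?_⟩, h0⟩
    intro h
    rw [Set.mem_singleton_iff] at h
    rw [h] at h0
    have : (n i - 1) / 2 = 0 := h0
    omega
  · refine ⟨w', ⟨hw', ?_⟩, hM⟩
    intro h
    rw [Set.mem_singleton_iff] at h
    rw [h] at hM
    have : (n i - 1) / 2 = n i - 1 := hM
    omega

lemma odd_main (hd : 0 < d) (h2 : ∀ i, 2 ≤ n i) (hodd : ∀ i, n i % 2 = 1) :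
    ∀ k (P : Finset (Vtx n)), Fintype.card (Vtx n) - P.card ≤ k →
    (∀ x, x ∈ P ↔ rho x ∈ P) →
    ((center h2 ∈ P → (DNTgame (latticeGraph d n)).nim P = 0) ∧
     (center h2 ∉ P → Spanning ((↑P : Set (Vtx n))ᶜ) →
        (DNTgame (latticeGraph d n)).nim P = 1)) := by
  have h3 : ∀ i, 3 ≤ n i := fun i => by have := h2 i; have := hodd i; omega
  intro k
  induction k with
  | zero =>
    intro P hcard _
    constructor
    · intro _
      refine (GameGraph.nim_def _ _).trans ?_
      apply mex_eq_zero_of_not_mem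
      rintro ⟨Q, hQ, -⟩
      obtain ⟨v, hv, rfl, -⟩ := (opt_iff hd h2).mp hQ
      have h' : (insert v P).card ≤ Fintype.card (Vtx n) := Finset.card_le_univ _
      have := Finset.card_insert_of_notMem hv
      omega
    · intro hc _
      exfalso
      have hle : P.card ≤ Fintype.card (Vtx n) := Finset.card_le_univ _
      have : P = Finset.univ := Finset.eq_univ_of_card P (by omega)
      exact hc (this ▸ Finset.mem_univ _)
  | succ k ih =>
    intro P hcard hsym
    have hcP : P.card ≤ Fintype.card (Vtx n) := Finset.card_le_univ _
    constructor
    · intro hc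
      refine (GameGraph.nim_def _ _).trans ?_
      apply mex_eq_zero_of_not_mem
      rintro ⟨Q, hQ, hQ0⟩
      obtain ⟨v, hv, rfl, hsp⟩ := (opt_iff hd h2).mp hQ
      have hvc : v ≠ center h2 := fun h => hv (h ▸ hc)
      have hρvne : rho v ≠ v := fun h => hvc (fix_eq_center h2 h)
      obtain ⟨hρvQ, hRopt, hsymR, hcR⟩ := mirror_opt hd h2 hsym hρvne hv hsp
      have hle : (insert (rho v) (insert v P)).card ≤ Fintype.card (Vtx n) :=
        Finset.card_le_univ _
      have hnimR := (ih (insert (rho v) (insert v P)) (by omega) hsymR).1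
        (Finset.mem_insert_of_mem (Finset.mem_insert_of_mem hc))
      have hne := nim_ne (DNTgame (latticeGraph d n))
        (inferInstanceAs (Finite (Finset (Vtx n)))) hRopt
      exact hne (by rw [hQ0, hnimR])
    · intro hc hsp
      refine (GameGraph.nim_def _ _).trans ?_
      -- the option of taking the center
      have hspc : Spanning ((↑(insert (center h2) P) : Set (Vtx n))ᶜ) := by
        rw [compl_insert_coe]
        exact span_diff_center h2 h3 hsp
      have hQ0opt : insert (center h2) P ∈ DNTgraphOpt (latticeGraph d n) P :=
        (opt_iff hd h2).mpr ⟨center h2, hc, rfl, hspc⟩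
      have hsymQ0 : ∀ x, x ∈ insert (center h2) P ↔ rho x ∈ insert (center h2) P := by
        intro x
        simp only [Finset.mem_insert]
        constructor
        · rintro (rfl | h)
          · left; exact rho_center h2 hodd
          · right; exact (hsym x).mp h
        · rintro (h | h)
          · left
            have : rho (rho x) = rho (center h2) := congrArg rho h
            rwa [rho_rho, rho_center h2 hodd] at this
          · right; exact (hsym x).mpr h
      have hcQ0 : (insert (center h2) P).card = P.card + 1 :=
        Finset.card_insert_of_notMem hc
      have hnimQ0 :=
        (ih (insert (center h2) P) (by omega) hsymQ0).1 (Finset.mem_insert_self _ _)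
      apply mex_eq_one
      · exact ⟨(insert (center h2) P : Finset (Vtx n)), hQ0opt, hnimQ0⟩
      · rintro ⟨Q, hQ, hQ1⟩
        obtain ⟨v, hv, rfl, hspQ⟩ := (opt_iff hd h2).mp hQ
        by_cases hvc : v = center h2
        · subst hvc
          rw [hnimQ0] at hQ1
          exact one_ne_zero hQ1.symm
        · have hρvne : rho v ≠ v := fun h => hvc (fix_eq_center h2 h)
          obtain ⟨hρvQ, hRopt, hsymR, hcR⟩ := mirror_opt hd h2 hsym hρvne hv hspQ
          have hle : (insert (rho v) (insert v P)).card ≤ Fintype.card (Vtx n) :=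
            Finset.card_le_univ _
          have hcR' : center h2 ∉ insert (rho v) (insert v P) := by
            simp only [Finset.mem_insert]
            push_neg
            refine ⟨?_, fun h => hvc h.symm, hc⟩
            intro h
            have : rho (center h2) = rho (rho v) := congrArg rho h
            rw [rho_rho, rho_center h2 hodd] at this
            exact hvc this.symm
          have hspR : Spanning ((↑(insert (rho v) (insert v P)) : Set (Vtx n))ᶜ) := by
            obtain ⟨-, hRopt', -, -⟩ := mirror_opt hd h2 hsym hρvne hv hspQ
            obtain ⟨w, hw, hins, hsp'⟩ := (opt_iff hd h2).mp hRopt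
            rwa [← hins] at hsp'
          have hnimR := (ih (insert (rho v) (insert v P)) (by omega) hsymR).2 hcR' hspR
          have hne := nim_ne (DNTgame (latticeGraph d n))
            (inferInstanceAs (Finite (Finset (Vtx n)))) hRopt
          exact hne (by rw [hQ1, hnimR])

lemma spanning_univ (hd : 0 < d) (h1 : ∀ i, 1 ≤ n i) :
    Spanning (Set.univ : Set (Vtx n)) := by
  intro i
  exact ⟨⟨fun j => ⟨0, h1 j⟩, trivial, rfl⟩,
    ⟨fun j => ⟨n j - 1, by have := h1 j; omega⟩, trivial, rfl⟩⟩

end GameArg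


end LatticeDNT

/-- For every lattice graph `Γ = P_{n₁} □ ⋯ □ P_{n_d}` with
`2 ≤ n₁ ≤ ⋯ ≤ n_d` and `n_d ≥ 3`, `nim(DNT(Γ)) = pty (n₁ ⋯ n_d)`. -/
theorem lattice_DNT_nim (d : ℕ) (hd : 0 < d) (n : Fin d → ℕ) (hmono : Monotone n)
    (h2 : ∀ i, 2 ≤ n i) (h3 : 3 ≤ n ⟨d - 1, by omega⟩) :
    (DNTgame (latticeGraph d n)).nimValue = (∏ i, n i) % 2 := by
  classical
  have h1 : ∀ i, 1 ≤ n i := fun i => le_trans one_le_two (h2 i)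
  show (DNTgame (latticeGraph d n)).nim (∅ : Finset (LatticeDNT.Vtx n)) = _
  by_cases hodd : ∀ i, n i % 2 = 1
  · have hspan : LatticeDNT.Spanning (((∅ : Finset (LatticeDNT.Vtx n)) : Set (LatticeDNT.Vtx n)))ᶜ := by
      rw [Finset.coe_empty, Set.compl_empty]
      exact LatticeDNT.spanning_univ hd h1
    have hnim := (LatticeDNT.odd_main hd h2 hodd (Fintype.card (LatticeDNT.Vtx n)) ∅
        (by simp) (by simp)).2 (Finset.notMem_empty _) hspan
    rw [hnim]
    have hprod : Odd (∏ i, n i) :=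
      Finset.prod_induction n Odd (fun a b ha hb => ha.mul hb) odd_one
        (fun i _ => Nat.odd_iff.mpr (hodd i))
    have := Nat.odd_iff.mp hprod
    omega
  · push_neg at hodd
    obtain ⟨i0, hi0⟩ := hodd
    have hE : n i0 % 2 = 0 := by omega
    have hnim := LatticeDNT.even_main hd h2 i0 hE (Fintype.card (LatticeDNT.Vtx n)) ∅
      (by simp) (by simp)
    rw [hnim]
    have hdvd : 2 ∣ ∏ i, n i :=
      dvd_trans (by omega : 2 ∣ n i0) (Finset.dvd_prod_of_mem n (Finset.mem_univ i0))
    omega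
end

section
/- A subset K of the vertex set of the grid graph P_m□P_n (whose vertices are pairs (i,j) with 1 ≤ i ≤ m, 1 ≤ j ≤ n, two vertices adjacent when they differ by 1 in exactly one coordinate) is geodetically convex if and only if K = A × B, where A is an interval of consecutive integers in {1,…,m} and B is an interval of consecutive integers in {1,…,n} (including the possibility that K is empty). -/
/-- The grid graph `P_m □ P_n`, the box product of two path graphs. -/
def gridGraph (m n : ℕ) : SimpleGraph (Fin m × Fin n) :=
  (SimpleGraph.pathGraph m).boxProd (SimpleGraph.pathGraph n)

open SimpleGraph


private lemma ndist (a b : ℕ) : Nat.dist a b = a - b + (b - a) := rfl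

private lemma pathWalk {N : ℕ} : ∀ (k : ℕ) (a b : Fin N), (b : ℕ) = a + k →
    ∃ w : (pathGraph N).Walk a b, w.length = k := by
  intro k
  induction k with
  | zero =>
    intro a b h
    have : a = b := Fin.ext (by omega)
    subst this
    exact ⟨.nil, rfl⟩
  | succ k ih =>
    intro a b h
    have hb := b.isLt
    have hlt : (a : ℕ) + 1 < N := by omega
    set a' : Fin N := ⟨a + 1, hlt⟩ with ha'
    have hadj : (pathGraph N).Adj a a' := by rw [pathGraph_adj]; left; rfl
    obtain ⟨w, hw⟩ := ih a' b (by simp [ha']; omega)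
    exact ⟨.cons hadj w, by simp [hw]⟩

private lemma pathWalk_dist {N : ℕ} (a b : Fin N) :
    ∃ w : (pathGraph N).Walk a b, w.length = Nat.dist (a : ℕ) (b : ℕ) := by
  rcases le_total (a : ℕ) (b : ℕ) with h | h
  · obtain ⟨w, hw⟩ := pathWalk ((b : ℕ) - a) a b (by omega)
    exact ⟨w, by rw [hw, Nat.dist_eq_sub_of_le h]⟩
  · obtain ⟨w, hw⟩ := pathWalk ((a : ℕ) - b) b a (by omega)
    exact ⟨w.reverse, by rw [SimpleGraph.Walk.length_reverse, hw,
      Nat.dist_eq_sub_of_le_right h]⟩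

private lemma grid_walk_le {m n : ℕ} {u v : Fin m × Fin n}
    (w : (gridGraph m n).Walk u v) :
    Nat.dist (u.1 : ℕ) (v.1 : ℕ) + Nat.dist (u.2 : ℕ) (v.2 : ℕ) ≤ w.length := by
  induction w with
  | nil => simp [Nat.dist_self]
  | @cons u x v h p ih =>
    have t1 := Nat.dist.triangle_inequality (u.1 : ℕ) (x.1 : ℕ) (v.1 : ℕ)
    have t2 := Nat.dist.triangle_inequality (u.2 : ℕ) (x.2 : ℕ) (v.2 : ℕ)
    have hstep : Nat.dist (u.1 : ℕ) (x.1 : ℕ) + Nat.dist (u.2 : ℕ) (x.2 : ℕ) = 1 := by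
      rcases (boxProd_adj.mp h) with ⟨ha, he⟩ | ⟨ha, he⟩ <;>
        rw [pathGraph_adj] at ha <;>
        have := congrArg Fin.val he <;>
        simp only [ndist] at * <;> omega
    simp only [SimpleGraph.Walk.length_cons]
    omega

private lemma grid_dist {m n : ℕ} (u v : Fin m × Fin n) :
    (gridGraph m n).dist u v = Nat.dist (u.1 : ℕ) (v.1 : ℕ) + Nat.dist (u.2 : ℕ) (v.2 : ℕ) := by
  obtain ⟨w1, h1⟩ := pathWalk_dist u.1 v.1
  obtain ⟨w2, h2⟩ := pathWalk_dist u.2 v.2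
  let w : (gridGraph m n).Walk u v :=
    (SimpleGraph.Walk.boxProdLeft (H := pathGraph n) u.2 w1).append
      (SimpleGraph.Walk.boxProdRight (pathGraph m) v.1 w2)
  apply le_antisymm
  · refine le_trans (SimpleGraph.dist_le w) ?_
    refine (SimpleGraph.Walk.length_append _ _).le.trans ?_
    exact (congrArg₂ (· + ·) ((SimpleGraph.Walk.length_map _ _).trans h1)
      ((SimpleGraph.Walk.length_map _ _).trans h2)).le
  · obtain ⟨p, hp⟩ := (SimpleGraph.Reachable.exists_walk_length_eq_dist ⟨w⟩)
    rw [← hp]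
    exact grid_walk_le p

/-- A vertex subset of the grid graph `P_m □ P_n` is geodetically convex iff it is a
product of two intervals of consecutive values (possibly empty). -/
theorem grid_convex_iff (m n : ℕ) (hm : 2 ≤ m) (hn : 2 ≤ n)
    (K : Set (Fin m × Fin n)) :
    geoConvex (gridGraph m n) K ↔
      ∃ (a b : Fin m) (c d : Fin n), K = Set.Icc a b ×ˢ Set.Icc c d := by
  constructor
  · intro hK
    rcases K.eq_empty_or_nonempty with hKe | ⟨p0, hp0⟩
    · refine ⟨⟨1, by omega⟩, ⟨0, by omega⟩, ⟨1, by omega⟩, ⟨0, by omega⟩, ?_⟩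
      rw [hKe, Set.Icc_eq_empty (by rw [Fin.not_le, Fin.mk_lt_mk]; omega)]
      simp
    · -- corner and midpoint closure properties
      have hcorner : ∀ p ∈ K, ∀ q ∈ K, (p.1, q.2) ∈ K := by
        intro p hp q hq
        refine hK p hp q hq (p.1, q.2) ?_
        simp only [grid_dist, ndist]
        omega
      have hmid : ∀ p ∈ K, ∀ q ∈ K, ∀ w : Fin m × Fin n,
          Nat.dist (p.1 : ℕ) (w.1 : ℕ) + Nat.dist (w.1 : ℕ) (q.1 : ℕ)
            = Nat.dist (p.1 : ℕ) (q.1 : ℕ) →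
          Nat.dist (p.2 : ℕ) (w.2 : ℕ) + Nat.dist (w.2 : ℕ) (q.2 : ℕ)
            = Nat.dist (p.2 : ℕ) (q.2 : ℕ) → w ∈ K := by
        intro p hp q hq w h1 h2
        exact hK p hp q hq w (by simp only [grid_dist]; omega)
      classical
      have hfin := Set.toFinite K
      set F := hfin.toFinset with hF
      have hFne : F.Nonempty := ⟨p0, hfin.mem_toFinset.mpr hp0⟩
      obtain ⟨pa, hpa, hpaMin⟩ := F.exists_min_image Prod.fst hFne
      obtain ⟨pb, hpb, hpbMax⟩ := F.exists_max_image Prod.fst hFne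
      obtain ⟨pc, hpc, hpcMin⟩ := F.exists_min_image Prod.snd hFne
      obtain ⟨pd, hpd, hpdMax⟩ := F.exists_max_image Prod.snd hFne
      rw [hfin.mem_toFinset] at hpa hpb hpc hpd
      refine ⟨pa.1, pb.1, pc.2, pd.2, ?_⟩
      ext ⟨x, y⟩
      simp only [Set.mem_prod, Set.mem_Icc]
      constructor
      · intro hxy
        have hxF : (x, y) ∈ F := hfin.mem_toFinset.mpr hxy
        exact ⟨⟨hpaMin _ hxF, hpbMax _ hxF⟩, hpcMin _ hxF, hpdMax _ hxF⟩
      · rintro ⟨⟨hax, hxb⟩, hcy, hyd⟩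
        rw [Fin.le_def] at hax hxb hcy hyd
        have hac : (pa.1, pc.2) ∈ K := hcorner pa hpa pc hpc
        have had : (pa.1, pd.2) ∈ K := hcorner pa hpa pd hpd
        have hbc : (pb.1, pc.2) ∈ K := hcorner pb hpb pc hpc
        have hbd : (pb.1, pd.2) ∈ K := hcorner pb hpb pd hpd
        have hab := hpaMin pb (hfin.mem_toFinset.mpr hpb)
        have hcd := hpcMin pd (hfin.mem_toFinset.mpr hpd)
        rw [Fin.le_def] at hab hcd
        have hxc : (x, pc.2) ∈ K := by
          refine hmid (pa.1, pc.2) hac (pb.1, pc.2) hbc (x, pc.2) ?_ ?_ <;>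
            simp only [ndist] <;> omega
        have hxd : (x, pd.2) ∈ K := by
          refine hmid (pa.1, pd.2) had (pb.1, pd.2) hbd (x, pd.2) ?_ ?_ <;>
            simp only [ndist] <;> omega
        refine hmid (x, pc.2) hxc (x, pd.2) hxd (x, y) ?_ ?_ <;>
          simp only [ndist] <;> omega
  · rintro ⟨a, b, c, d, rfl⟩
    rintro u hu v hv w hw
    simp only [Set.mem_prod, Set.mem_Icc] at hu hv ⊢
    simp only [grid_dist, ndist] at hw
    obtain ⟨⟨hu1, hu2⟩, hu3, hu4⟩ := hu
    obtain ⟨⟨hv1, hv2⟩, hv3, hv4⟩ := hv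
    rw [Fin.le_def] at hu1 hu2 hu3 hu4 hv1 hv2 hv3 hv4
    refine ⟨⟨?_, ?_⟩, ?_, ?_⟩ <;> rw [Fin.le_def] <;> omega
end
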